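/- Let H := Q·T_0 + q·Σ_{x=1}^{L} T_x, where T_0, T_1, …, T_L are the explicit matrices of the type-B Hecke algebra action given in the context, and let G be the diagonal matrix with G(b,b) := [ ∏_{j=1}^{d(1)} Q q^{L + x_j − N→^1_{x_j}(b)} ] · ζ_0 · [ ∏_{i=1}^{d(−1)} q^{L − y_i − N→^1_{y_i}(b)} ] (ζ_0 := Q q^{L−d(1)}, 1, or q^{L−d(1)} according as b(0) = 1, 0, or −1). Then G^{−1} (H − (L+1)·Id) G equals the generator 𝓛 of the single-species open ASEP: its off-diagonal entries are q² for swapping an adjacent pair (x−1,x) with larger value on the left, 1 for swapping an adjacent pair with larger value on the right, 1 for changing the value at site 0 from 1 to −1, and Q² for changing the value at site 0 from −1 to 1, with diagonal entries making rows sum to 0. -/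

import Mathlib

/-!
`G(b,b)` is a product over the sites `z` of a factor depending only on `b(z)` and on the number
`N→¹_z(b)` of `1`s to the right of `z`. Swapping a decreasing adjacent pair changes only the two
factors at that pair, and multiplies `G` by `q`; turning `b(0) = −1` into `1` multiplies `G` by
`Q`. Hence conjugation by `G` turns the off-diagonal entries `q` of `qT_x` into the rates `q²`
and `1`, and the entries `Q` of `QT₀` into `1` and `Q²`. On the diagonal, `1 − (qT_x)(b,b)` and
`1 − (QT₀)(b,b)` are exactly the total rates out of `b` across the bond `(x−1, x)` and at site
`0`, so subtracting `(L+1)·Id` produces the row sums of the generator.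
-/

open Matrix BigOperators Finset

noncomputable section

namespace Stmt8

/-- Configurations of the single-species open ASEP on sites `{0,1,…,L}`.
Values are encoded in `Fin 3`: `0 ↦ −1`, `1 ↦ 0` (hole), `2 ↦ 1`;
this encoding is order-preserving. -/
abbrev Conf (L : ℕ) := Fin (L + 1) → Fin 3

/-- The matrix `qT_x` (for `1 ≤ x ≤ L`), acting on sites `x−1, x`:
diagonal entry `1` if `η(x−1) = η(x)`, `1 − q²` if `η(x−1) > η(x)`, `0` if
`η(x−1) < η(x)`; entry `q` for the swap of the values at sites `x−1` and `x`
when they differ; all other entries `0`. -/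
def qT (L : ℕ) (q : ℝ) (x : ℕ) : Matrix (Conf L) (Conf L) ℝ :=
  fun η η' =>
    if h : 1 ≤ x ∧ x ≤ L then
      (if η' = η then
        (if η ⟨x - 1, by omega⟩ = η ⟨x, by omega⟩ then 1
         else if η ⟨x, by omega⟩ < η ⟨x - 1, by omega⟩ then 1 - q ^ 2
         else 0)
      else if η' = η ∘ Equiv.swap ⟨x - 1, by omega⟩ ⟨x, by omega⟩ ∧
          η ⟨x - 1, by omega⟩ ≠ η ⟨x, by omega⟩ then q
      else 0)
    else 0

/-- The matrix `QT_0`, acting on site `0`: diagonal entry `1` if `η(0) = 0`,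
`1 − Q²` if `η(0) = −1`, `0` if `η(0) = 1`; entry `Q` whenever `η'` agrees with `η`
off site `0` and `{η(0), η'(0)} = {−1, 1}`; all other entries `0`. -/
def QT0 (L : ℕ) (Q : ℝ) : Matrix (Conf L) (Conf L) ℝ :=
  fun η η' =>
    if η' = η then
      (if η 0 = 1 then 1 else if η 0 = 0 then 1 - Q ^ 2 else 0)
    else if (∀ z : Fin (L + 1), z ≠ 0 → η' z = η z) ∧
        ((η 0 = 0 ∧ η' 0 = 2) ∨ (η 0 = 2 ∧ η' 0 = 0)) then Q
    else 0

/-- The Hamiltonian `H = Q·T₀ + q·Σ_{x=1}^{L} T_x`. -/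
def Ham (L : ℕ) (q Q : ℝ) : Matrix (Conf L) (Conf L) ℝ :=
  QT0 L Q + ∑ x ∈ Finset.Icc 1 L, qT L q x

/-- `N→¹_x(b)`: the number of sites strictly to the right of `x` with `b`-value `1`. -/
def Nr1 (L : ℕ) (b : Conf L) (x : Fin (L + 1)) : ℕ :=
  (Finset.univ.filter (fun y : Fin (L + 1) => x < y ∧ b y = 2)).card

/-- `d(1)`: the number of sites in `{1,…,L}` with `b`-value `1`. -/
def d1 (L : ℕ) (b : Conf L) : ℕ :=
  (Finset.univ.filter (fun x : Fin (L + 1) => 0 < (x : ℕ) ∧ b x = 2)).card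

/-- `ζ₀ = Q q^{L−d(1)}`, `1`, or `q^{L−d(1)}` according as `b(0) = 1`, `0`, or `−1`. -/
def zeta0 (L : ℕ) (q Q : ℝ) (b : Conf L) : ℝ :=
  if b 0 = 2 then Q * q ^ ((L : ℤ) - (d1 L b : ℤ))
  else if b 0 = 1 then 1
  else q ^ ((L : ℤ) - (d1 L b : ℤ))

/-- `G(b,b) = [∏_{j=1}^{d(1)} Q q^{L+x_j−N→¹_{x_j}(b)}] ζ₀ [∏_{i=1}^{d(−1)} q^{L−y_i−N→¹_{y_i}(b)}]`. -/
def Gfun (L : ℕ) (q Q : ℝ) (b : Conf L) : ℝ :=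
  (∏ x ∈ Finset.univ.filter (fun x : Fin (L + 1) => 0 < (x : ℕ) ∧ b x = 2),
      Q * q ^ ((L : ℤ) + ((x : ℕ) : ℤ) - (Nr1 L b x : ℤ))) *
    zeta0 L q Q b *
    (∏ y ∈ Finset.univ.filter (fun y : Fin (L + 1) => 0 < (y : ℕ) ∧ b y = 0),
      q ^ ((L : ℤ) - ((y : ℕ) : ℤ) - (Nr1 L b y : ℤ)))

/-- Bulk off-diagonal rates of the open ASEP generator. -/
def bulk (L : ℕ) (q : ℝ) (η η' : Conf L) : ℝ :=
  ∑ x : Fin (L + 1),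
    if h : (x : ℕ) + 1 < L + 1 then
      (if η' = η ∘ Equiv.swap x ⟨(x : ℕ) + 1, h⟩ ∧ η x ≠ η ⟨(x : ℕ) + 1, h⟩ then
        (if η ⟨(x : ℕ) + 1, h⟩ < η x then q ^ 2 else 1)
      else 0)
    else 0

/-- Boundary off-diagonal rates of the open ASEP generator at site `0`. -/
def bdry (L : ℕ) (Q : ℝ) (η η' : Conf L) : ℝ :=
  if (∀ z : Fin (L + 1), z ≠ 0 → η' z = η z) ∧ η 0 = 2 ∧ η' 0 = 0 then 1
  else if (∀ z : Fin (L + 1), z ≠ 0 → η' z = η z) ∧ η 0 = 0 ∧ η' 0 = 2 then Q ^ 2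
  else 0

/-- The generator `𝓛` of the single-species open ASEP on `{0,…,L}`. -/
def gen (L : ℕ) (q Q : ℝ) : Matrix (Conf L) (Conf L) ℝ :=
  fun η η' =>
    if η' = η then
      -∑ η'' : Conf L,
        (if η'' = η then 0 else bulk L q η η'' + bdry L Q η η'')
    else bulk L q η η' + bdry L Q η η'

theorem _root_.Matrix.inv_diagonal_mul_mul_diagonal_eq {n K : Type*} [Fintype n] [DecidableEq n]
    [Field K] {w : n → K} (hw : ∀ i, w i ≠ 0) {A B : Matrix n n K}
    (h : ∀ i j, A i j * w j = w i * B i j) :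
    (diagonal w)⁻¹ * A * diagonal w = B := by
  have hinv : (diagonal w)⁻¹ = diagonal w⁻¹ :=
    inv_eq_left_inv (by rw [diagonal_mul_diagonal]; simp [hw])
  ext i j
  rw [hinv, mul_diagonal, diagonal_mul, Pi.inv_apply, mul_assoc, h, ← mul_assoc,
    inv_mul_cancel₀ (hw i), one_mul]

variable {L : ℕ} {q Q : ℝ}

lemma fin3_cases (v : Fin 3) : v = 0 ∨ v = 1 ∨ v = 2 := by fin_cases v <;> simp

lemma Nr1_castSucc (b : Conf L) (k : Fin L) :
    Nr1 L b k.castSucc = Nr1 L b k.succ + if b k.succ = 2 then 1 else 0 := by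
  simp only [Nr1, Finset.card_filter]
  rw [← Fintype.sum_ite_eq' k.succ (fun y => if b y = 2 then 1 else 0),
    ← Finset.sum_add_distrib]
  refine Finset.sum_congr rfl fun y _ => ?_
  by_cases hy : y = k.succ
  · simp [hy]
  · simp [hy, Ne.symm hy, Fin.castSucc_lt_iff_succ_le, le_iff_lt_or_eq]

lemma Nr1_comp_swap (b : Conf L) (k : Fin L) {z : Fin (L + 1)} (hz : z ≠ k.castSucc) :
    Nr1 L (b ∘ Equiv.swap k.castSucc k.succ) z = Nr1 L b z := by
  have hlt : z < k.castSucc ↔ z < k.succ := by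
    have := Fin.val_ne_of_ne hz
    simp only [Fin.lt_def, Fin.val_succ, Fin.val_castSucc] at this ⊢
    omega
  refine Finset.card_equiv (Equiv.swap k.castSucc k.succ) fun y => ?_
  simp only [Finset.mem_filter, Finset.mem_univ, true_and, Function.comp_apply]
  rcases eq_or_ne y k.castSucc with rfl | h1
  · simp [hlt]
  rcases eq_or_ne y k.succ with rfl | h2
  · simp [hlt]
  · rw [Equiv.swap_apply_of_ne_of_ne h1 h2]

lemma Nr1_update_zero (b : Conf L) (v : Fin 3) (z : Fin (L + 1)) :
    Nr1 L (Function.update b 0 v) z = Nr1 L b z :=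
  congrArg Finset.card <| Finset.filter_congr fun _ _ =>
    and_congr_right fun hzy => by rw [Function.update_of_ne (Fin.ne_zero_of_lt hzy)]

lemma Nr1_zero (b : Conf L) : Nr1 L b 0 = d1 L b := rfl

/-- The factor of `G(b,b)` at a site `z` with value `v` and `N = N→¹_z(b)`; at `z = 0` it is
`ζ₀`, because `N→¹_0(b) = d(1)`. -/
def siteFactor (L : ℕ) (q Q : ℝ) (v : Fin 3) (z N : ℕ) : ℝ :=
  if v = 2 then Q * q ^ ((L : ℤ) + z - N) else if v = 0 then q ^ ((L : ℤ) - z - N) else 1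

lemma siteFactor_ne_zero (hq : q ≠ 0) (hQ : Q ≠ 0) (v : Fin 3) (z N : ℕ) :
    siteFactor L q Q v z N ≠ 0 := by
  unfold siteFactor
  split_ifs
  exacts [mul_ne_zero hQ (zpow_ne_zero _ hq), zpow_ne_zero _ hq, one_ne_zero]

lemma siteFactor_swap (hq : q ≠ 0) {u v : Fin 3} (h : v < u) (z n : ℕ) :
    siteFactor L q Q v z (n + if u = 2 then 1 else 0) * siteFactor L q Q u (z + 1) n =
      q * (siteFactor L q Q u z (n + if v = 2 then 1 else 0) * siteFactor L q Q v (z + 1) n) := by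
  fin_cases u <;> fin_cases v <;> simp at h <;>
    simp [siteFactor, zpow_add₀ hq, zpow_sub₀ hq] <;> field_simp

def weight (L : ℕ) (q Q : ℝ) (b : Conf L) : ℝ := ∏ z, siteFactor L q Q (b z) z (Nr1 L b z)

lemma weight_ne_zero (hq : q ≠ 0) (hQ : Q ≠ 0) (b : Conf L) : weight L q Q b ≠ 0 :=
  Finset.prod_ne_zero_iff.2 fun _ _ => siteFactor_ne_zero hq hQ _ _ _

lemma weight_comp_swap (hq : q ≠ 0) (b : Conf L) (k : Fin L) (h : b k.succ < b k.castSucc) :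
    weight L q Q (b ∘ Equiv.swap k.castSucc k.succ) = q * weight L q Q b := by
  set c := b ∘ Equiv.swap k.castSucc k.succ
  have hne : k.castSucc ≠ k.succ := Fin.castSucc_lt_succ.ne
  have hrest : ∀ z ∈ ({k.castSucc, k.succ} : Finset (Fin (L + 1)))ᶜ,
      siteFactor L q Q (c z) z (Nr1 L c z) = siteFactor L q Q (b z) z (Nr1 L b z) := by
    intro z hz
    simp only [Finset.mem_compl, Finset.mem_insert, Finset.mem_singleton, not_or] at hz
    simp only [c, Function.comp_apply, Equiv.swap_apply_of_ne_of_ne hz.1 hz.2,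
      Nr1_comp_swap b k hz.1]
  unfold weight
  rw [← prod_mul_prod_compl {k.castSucc, k.succ}, ← prod_mul_prod_compl {k.castSucc, k.succ},
    prod_congr rfl hrest, prod_pair hne, prod_pair hne, ← mul_assoc]
  congr 1
  rw [Nr1_castSucc c, Nr1_castSucc b, Nr1_comp_swap b k hne.symm]
  simp only [c, Function.comp_apply, Equiv.swap_apply_left, Equiv.swap_apply_right,
    Fin.val_succ, Fin.val_castSucc]
  exact siteFactor_swap hq h _ _

lemma weight_update_zero_two (b : Conf L) :
    weight L q Q (Function.update b 0 2) = Q * weight L q Q (Function.update b 0 0) := by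
  simp only [weight, Fin.prod_univ_succ, Function.update_self, Nr1_update_zero,
    Function.update_of_ne (Fin.succ_ne_zero _)]
  simp [siteFactor, mul_assoc]

lemma Gfun_eq_weight : Gfun L q Q = weight L q Q := by
  funext b
  simp only [Gfun, weight, prod_filter, Fin.prod_univ_succ, Fin.val_zero, lt_irrefl, false_and,
    if_false, one_mul, Fin.val_succ, Nat.succ_pos, true_and]
  rw [mul_right_comm, mul_comm, ← prod_mul_distrib]
  congr 1
  · unfold zeta0 siteFactor
    rcases fin3_cases (b 0) with h | h | h <;> simp [h, Nr1_zero]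
  · refine prod_congr rfl fun i _ => ?_
    unfold siteFactor
    rcases fin3_cases (b i.succ) with h | h | h <;> simp [h]

def bondRate (L : ℕ) (q : ℝ) (k : Fin L) (η η' : Conf L) : ℝ :=
  if η' = η ∘ Equiv.swap k.castSucc k.succ ∧ η k.castSucc ≠ η k.succ then
    (if η k.succ < η k.castSucc then q ^ 2 else 1)
  else 0

lemma bulk_eq_sum_bondRate (η η' : Conf L) :
    bulk L q η η' = ∑ k : Fin L, bondRate L q k η η' := by
  rw [bulk, Fin.sum_univ_castSucc, dif_neg (by simp), add_zero]
  refine sum_congr rfl fun k _ => ?_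
  rw [dif_pos (by simp)]
  rfl

lemma Ham_eq_add_sum (L : ℕ) (q Q : ℝ) :
    Ham L q Q = QT0 L Q + ∑ k : Fin L, qT L q (k + 1) := by
  rw [Ham, ← Finset.Ico_add_one_right_eq_Icc, sum_Ico_eq_sum_range, ← Fin.sum_univ_eq_sum_range]
  simp [add_comm]

lemma qT_succ_apply_self (k : Fin L) (η : Conf L) :
    qT L q (k + 1) η η = if η k.castSucc = η k.succ then 1
      else if η k.succ < η k.castSucc then 1 - q ^ 2 else 0 := by
  rw [qT, dif_pos (by omega), if_pos rfl]
  rfl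

lemma qT_succ_apply_of_ne (k : Fin L) {η η' : Conf L} (h : η' ≠ η) :
    qT L q (k + 1) η η' =
      if η' = η ∘ Equiv.swap k.castSucc k.succ ∧ η k.castSucc ≠ η k.succ then q else 0 := by
  rw [qT, dif_pos (by omega), if_neg h]
  rfl

lemma bondRate_self (k : Fin L) (η : Conf L) : bondRate L q k η η = 0 := by
  refine if_neg fun ⟨h, hne⟩ => hne ?_
  simpa using congrFun h k.castSucc

lemma qT_mul_weight_of_ne (hq : q ≠ 0) (k : Fin L) {a c : Conf L} (hac : c ≠ a) :
    qT L q (k + 1) a c * weight L q Q c = weight L q Q a * bondRate L q k a c := by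
  rw [qT_succ_apply_of_ne k hac, bondRate]
  split_ifs with hswap hlt
  · rw [hswap.1, weight_comp_swap hq a k hlt]
    ring
  · have hca : a = c ∘ Equiv.swap k.castSucc k.succ := by
      funext z
      simp [hswap.1]
    have hlt' : c k.succ < c k.castSucc := by
      simpa [hswap.1] using lt_of_le_of_ne (not_lt.1 hlt) hswap.2
    rw [hca, weight_comp_swap hq c k hlt', mul_one]
  · simp

lemma sum_bondRate (k : Fin L) (a : Conf L) :
    ∑ e, bondRate L q k a e = 1 - qT L q (k + 1) a a := by
  simp only [bondRate, ite_and, Fintype.sum_ite_eq', qT_succ_apply_self]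
  split_ifs <;> first | contradiction | ring

lemma eq_update_zero_iff {a c : Conf L} {v : Fin 3} :
    ((∀ z, z ≠ 0 → c z = a z) ∧ c 0 = v) ↔ c = Function.update a 0 v := by
  rw [Function.eq_update_iff]
  tauto

lemma bdry_self (η : Conf L) : bdry L Q η η = 0 := by
  unfold bdry
  split_ifs with h1 h2
  exacts [absurd (h1.2.1.symm.trans h1.2.2) (by decide),
    absurd (h2.2.1.symm.trans h2.2.2) (by decide), rfl]

lemma QT0_mul_weight_of_ne {a c : Conf L} (hac : c ≠ a) :
    QT0 L Q a c * weight L q Q c = weight L q Q a * bdry L Q a c := by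
  rw [QT0, bdry, if_neg hac]
  rcases fin3_cases (a 0) with h0 | h0 | h0 <;>
    simp only [h0, Fin.reduceEq, false_and, and_false, true_and, or_false, false_or,
      if_false, eq_update_zero_iff]
  · split_ifs with hc
    · rw [hc, weight_update_zero_two, Function.update_eq_self_iff.2 h0.symm]
      ring
    · simp
  · simp
  · split_ifs with hc
    · have hflip := weight_update_zero_two (q := q) (Q := Q) a
      rw [Function.update_eq_self_iff.2 h0.symm, ← hc] at hflip
      rw [hflip]
      ring
    · simp

lemma sum_bdry (a : Conf L) : ∑ e, bdry L Q a e = 1 - QT0 L Q a a := by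
  rw [QT0, if_pos rfl]
  rcases fin3_cases (a 0) with h0 | h0 | h0 <;>
    simp [bdry, h0, eq_update_zero_iff]

lemma gen_apply_self (a : Conf L) : gen L q Q a a = Ham L q Q a a - (L + 1) := by
  have hbulk : bulk L q a a = 0 := by simp [bulk_eq_sum_bondRate, bondRate_self]
  have hself (e : Conf L) :
      (if e = a then 0 else bulk L q a e + bdry L Q a e) = bulk L q a e + bdry L Q a e :=
    ite_eq_right_iff.2 fun h => by rw [h, hbulk, bdry_self, add_zero]
  rw [gen, if_pos rfl, sum_congr rfl fun e _ => hself e, sum_add_distrib]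
  simp only [bulk_eq_sum_bondRate]
  rw [sum_comm]
  simp only [sum_bondRate, sum_bdry, Ham_eq_add_sum, Matrix.add_apply, Matrix.sum_apply,
    sum_sub_distrib]
  simp only [sum_const, card_univ, Fintype.card_fin, nsmul_eq_mul, mul_one]
  ring

lemma Ham_mul_weight_of_ne (hq : q ≠ 0) {a c : Conf L} (hac : c ≠ a) :
    Ham L q Q a c * weight L q Q c = weight L q Q a * gen L q Q a c := by
  rw [Ham_eq_add_sum, Matrix.add_apply, Matrix.sum_apply, add_mul, sum_mul,
    QT0_mul_weight_of_ne hac,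
    sum_congr rfl fun k _ => qT_mul_weight_of_ne hq k hac, ← mul_sum, ← bulk_eq_sum_bondRate,
    gen, if_neg hac]
  ring

theorem conjugated_Hamiltonian_is_open_ASEP_generator_general (L : ℕ)
    (q Q : ℝ) (hq0 : 0 < q) (hQ0 : 0 < Q) :
    (Matrix.diagonal (Gfun L q Q))⁻¹ *
        (Ham L q Q - ((L : ℝ) + 1) • (1 : Matrix (Conf L) (Conf L) ℝ)) *
        Matrix.diagonal (Gfun L q Q) =
      gen L q Q := by
  rw [Gfun_eq_weight]
  refine inv_diagonal_mul_mul_diagonal_eq (weight_ne_zero hq0.ne' hQ0.ne') fun a c => ?_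
  rw [Matrix.sub_apply, Matrix.smul_apply, one_apply]
  rcases eq_or_ne c a with rfl | hac
  · rw [if_pos rfl, gen_apply_self]
    ring
  · rw [if_neg hac.symm, smul_zero, sub_zero, Ham_mul_weight_of_ne hq0.ne' hac]

/-- **Ground-state transformation** (Proposition, part (b), in the proof of
Theorem 1.3): `G⁻¹ (H − (L+1)·Id) G` equals the generator of the single-species
open ASEP. -/
theorem conjugated_Hamiltonian_is_open_ASEP_generator (L : ℕ) (hL : 1 ≤ L)
    (q Q : ℝ) (hq0 : 0 < q) (hq1 : q < 1) (hQ0 : 0 < Q) (hQ1 : Q < 1) :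
    (Matrix.diagonal (Gfun L q Q))⁻¹ *
        (Ham L q Q - ((L : ℝ) + 1) • (1 : Matrix (Conf L) (Conf L) ℝ)) *
        Matrix.diagonal (Gfun L q Q) =
      gen L q Q :=
  conjugated_Hamiltonian_is_open_ASEP_generator_general L q Q hq0 hQ0

end Stmt8

end
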